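/- Distributivity of individual knowledge over disjunction of positive formulas: For any φ₁, φ₂ ∈ L⁺, any player i, and any state (V,M) (with the complete hypergraph, i.e., ⊨), (V,M) ⊨ K_i(φ₁ ∨ φ₂) iff (V,M) ⊨ K_i φ₁ ∨ K_i φ₂. -/

import Mathlib

structure Msg (P A : Type) where
  sender : P
  grp : Set P
  fact : A

inductive Form (P A : Type) where
  | atom : A → Form P A
  | neg  : Form P A → Form P A
  | and  : Form P A → Form P A → Form P A
  | or   : Form P A → Form P A → Form P A
  | ck   : Set P → Form P A → Form P A

/-- The negation-free (positive) fragment L⁺. -/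
def Positive {P A : Type} : Form P A → Prop
  | .atom _ => True
  | .neg _ => False
  | .and φ ψ => Positive φ ∧ Positive ψ
  | .or φ ψ => Positive φ ∧ Positive ψ
  | .ck _ φ => Positive φ

/-- Atoms occurring in a formula. -/
def FactsF {P A : Type} : Form P A → Set A
  | .atom p => {p}
  | .neg φ => FactsF φ
  | .and φ ψ => FactsF φ ∪ FactsF ψ
  | .or φ ψ => FactsF φ ∪ FactsF ψ
  | .ck _ φ => FactsF φ

/-- Facts occurring in a set of messages. -/
def Facts {P A : Type} (M : Set (Msg P A)) : Set A := {p | ∃ m ∈ M, m.fact = p}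

/-- A state in the telling setting: messages (i,A,p) with i ∈ A, p ∈ At_i
    (ownership given by `owner`), and Facts(M) ⊆ V. -/
def TState {P A : Type} (owner : A → P) (V : Set A) (M : Set (Msg P A)) : Prop :=
  ∀ m ∈ M, m.sender ∈ m.grp ∧ owner m.fact = m.sender ∧ m.fact ∈ V

/-- All messages are H-compliant. -/
def HComp {P A : Type} (H : Set (Set P)) (M : Set (Msg P A)) : Prop :=
  ∀ m ∈ M, m.grp ∈ H

/-- Indistinguishability for player i: equality of (V_i, M_i). -/
def indist {P A : Type} (owner : A → P) (i : P)
    (s t : Set A × Set (Msg P A)) : Prop :=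
  {p ∈ s.1 | owner p = i} = {p ∈ t.1 | owner p = i} ∧
  {m ∈ s.2 | i ∈ m.grp} = {m ∈ t.2 | i ∈ m.grp}

/-- ∼_G: transitive closure of the union of the ∼_i, i ∈ G. -/
def reach {P A : Type} (owner : A → P) (G : Set P) :
    Set A × Set (Msg P A) → Set A × Set (Msg P A) → Prop :=
  Relation.TransGen (fun s t => ∃ i ∈ G, indist owner i s t)

/-- Semantics ⊨_H (telling setting): C_G quantifies over H-compliant telling states. -/
def sat {P A : Type} (owner : A → P) (H : Set (Set P)) :
    Form P A → Set A → Set (Msg P A) → Prop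
  | .atom p, V, _ => p ∈ V
  | .neg φ, V, M => ¬ sat owner H φ V M
  | .and φ ψ, V, M => sat owner H φ V M ∧ sat owner H ψ V M
  | .or φ ψ, V, M => sat owner H φ V M ∨ sat owner H ψ V M
  | .ck G φ, V, M => ∀ V' M', TState owner V' M' → HComp H M' →
      reach owner G (V, M) (V', M') → sat owner H φ V' M'

/-- The complete hypergraph: all nonempty subsets of players. -/
def completeH (P : Type) : Set (Set P) := {B | B.Nonempty}

/-- Iterated knowledge K_{i₁}…K_{i_k} φ along a word. -/
def Kw {P A : Type} (w : List P) (φ : Form P A) : Form P A :=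
  w.foldr (fun i ψ => Form.ck {i} ψ) φ

/-
A positive formula is monotone along the inclusion of telling states (V, M) ⊆ (V', M'): the only
nontrivial case is C_G φ, where every ∼_G-chain from (V', M') is shadowed, step by step, by a chain
from (V, M) of states lying below it; the j-step of the shadow keeps exactly what j sees of the
current state, closed under the facts of its messages.
Now (V_i ∪ Facts(M_i), M_i) is a telling state that player i cannot tell from (V, M) and that lies
below every such state, so for positive φ, K_i φ holds at (V, M) iff φ holds at this one state;
hence K_i distributes over ∨.
-/

section Telling

variable {P A : Type}

lemma TState.hComp_completeH {owner : A → P} {V : Set A} {M : Set (Msg P A)}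
    (h : TState owner V M) : HComp (completeH P) M :=
  fun m hm => ⟨m.sender, (h m hm).1⟩

lemma TState.facts_subset {owner : A → P} {V : Set A} {M N : Set (Msg P A)}
    (h : TState owner V M) (hN : N ⊆ M) : Facts N ⊆ V := by
  rintro p ⟨m, hm, rfl⟩
  exact (h m (hN hm)).2.2

lemma indist_trans {owner : A → P} {i : P} {s t u : Set A × Set (Msg P A)}
    (hst : indist owner i s t) (htu : indist owner i t u) : indist owner i s u :=
  ⟨hst.1.trans htu.1, hst.2.trans htu.2⟩

lemma indist_of_reach_singleton {owner : A → P} {i : P} {s t : Set A × Set (Msg P A)}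
    (h : reach owner {i} s t) : indist owner i s t := by
  induction h with
  | single h => obtain ⟨_, rfl, h⟩ := h; exact h
  | tail _ h ih => obtain ⟨_, rfl, h⟩ := h; exact indist_trans ih h

/-- The weakening of `u ⊆ s` that survives ∼-steps: the pairs along a ∼_G-chain need not be
telling states, so the facts of `u`'s messages are not required to lie in `s.1`. -/
def IsBelow (u s : Set A × Set (Msg P A)) : Prop :=
  u.2 ⊆ s.2 ∧ u.1 ⊆ s.1 ∪ Facts u.2

lemma IsBelow.fst_subset {owner : A → P} {u s : Set A × Set (Msg P A)} (h : IsBelow u s)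
    (hs : TState owner s.1 s.2) : u.1 ⊆ s.1 :=
  fun _ hp => (h.2 hp).elim id (hs.facts_subset h.1 ·)

def viewState (owner : A → P) (j : P) (s : Set A × Set (Msg P A)) :
    Set A × Set (Msg P A) :=
  ({p ∈ s.1 | owner p = j} ∪ Facts {m ∈ s.2 | j ∈ m.grp}, {m ∈ s.2 | j ∈ m.grp})

lemma tState_viewState {owner : A → P} {s : Set A × Set (Msg P A)} (h : TState owner s.1 s.2)
    (j : P) : TState owner (viewState owner j s).1 (viewState owner j s).2 :=
  fun m ⟨hm, hj⟩ => ⟨(h m hm).1, (h m hm).2.1, Or.inr ⟨m, ⟨hm, hj⟩, rfl⟩⟩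

lemma indist_viewState {owner : A → P} {s : Set A × Set (Msg P A)}
    (h : TState owner s.1 s.2) (j : P) : indist owner j s (viewState owner j s) := by
  refine ⟨?_, ?_⟩
  · ext p
    simp only [viewState, Set.mem_ofPred_eq, Set.mem_union]
    constructor
    · rintro ⟨hp, hj⟩
      exact ⟨Or.inl ⟨hp, hj⟩, hj⟩
    · rintro ⟨hp | ⟨m, ⟨hm, -⟩, rfl⟩, hj⟩
      exacts [⟨hp.1, hj⟩, ⟨(h m hm).2.2, hj⟩]
  · ext m
    simp only [viewState, Set.mem_ofPred_eq]
    tauto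

lemma isBelow_viewState {owner : A → P} {j : P} {u s s' : Set A × Set (Msg P A)}
    (hu : TState owner u.1 u.2) (h : IsBelow u s) (hss' : indist owner j s s') :
    IsBelow (viewState owner j u) s' := by
  have hmsg : {m ∈ u.2 | j ∈ m.grp} ⊆ s'.2 := fun m ⟨hm, hj⟩ =>
    ((Set.ext_iff.1 hss'.2 m).1 ⟨h.1 hm, hj⟩).1
  refine ⟨hmsg, ?_⟩
  rintro p (⟨hp, hj⟩ | hp)
  · rcases h.2 hp with hps | ⟨m, hm, rfl⟩
    · exact Or.inl ((Set.ext_iff.1 hss'.1 p).1 ⟨hps, hj⟩).1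
    · -- a message's fact is owned by its sender, who belongs to its group
      have hjm : j ∈ m.grp := by rw [← hj, (hu m hm).2.1]; exact (hu m hm).1
      exact Or.inr ⟨m, ⟨hm, hjm⟩, rfl⟩
  · exact Or.inr hp

lemma exists_reach_isBelow {owner : A → P} {G : Set P} {u s s' : Set A × Set (Msg P A)}
    (hu : TState owner u.1 u.2) (hus : IsBelow u s) (hss' : reach owner G s s') :
    ∃ u', TState owner u'.1 u'.2 ∧ reach owner G u u' ∧ IsBelow u' s' := by
  induction hss' with
  | single h =>
    obtain ⟨j, hj, h⟩ := h
    exact ⟨viewState owner j u, tState_viewState hu j,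
      .single ⟨j, hj, indist_viewState hu j⟩, isBelow_viewState hu hus h⟩
  | tail _ h ih =>
    obtain ⟨v, hv, huv, hv_below⟩ := ih
    obtain ⟨j, hj, h⟩ := h
    exact ⟨viewState owner j v, tState_viewState hv j,
      huv.tail ⟨j, hj, indist_viewState hv j⟩, isBelow_viewState hv hv_below h⟩

theorem sat_mono (owner : A → P) {φ : Form P A} (hφ : Positive φ) {V V' : Set A}
    {M M' : Set (Msg P A)} (hT : TState owner V M) (hT' : TState owner V' M')
    (hV : V ⊆ V') (hM : M ⊆ M') (h : sat owner (completeH P) φ V M) :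
    sat owner (completeH P) φ V' M' := by
  induction φ generalizing V M V' M' with
  | atom p => exact hV h
  | neg => exact hφ.elim
  | and φ ψ ihφ ihψ =>
    exact ⟨ihφ hφ.1 hT hT' hV hM h.1, ihψ hφ.2 hT hT' hV hM h.2⟩
  | or φ ψ ihφ ihψ =>
    exact h.imp (ihφ hφ.1 hT hT' hV hM) (ihψ hφ.2 hT hT' hV hM)
  | ck G φ ih =>
    intro V'' M'' hT'' _ hreach
    obtain ⟨u, hu, hr, hu_below⟩ :=
      exists_reach_isBelow (u := (V, M)) hT ⟨hM, hV.trans Set.subset_union_left⟩ hreach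
    exact ih hφ hu hT'' (hu_below.fst_subset hT'') hu_below.1 (h _ _ hu hu.hComp_completeH hr)

theorem sat_ck_singleton_iff (owner : A → P) {φ : Form P A} (hφ : Positive φ) {V : Set A}
    {M : Set (Msg P A)} (hS : TState owner V M) (i : P) :
    sat owner (completeH P) (.ck {i} φ) V M ↔
      sat owner (completeH P) φ (viewState owner i (V, M)).1 (viewState owner i (V, M)).2 := by
  have hview := tState_viewState (s := (V, M)) hS i
  refine ⟨fun h => h _ _ hview hview.hComp_completeH
    (.single ⟨i, rfl, indist_viewState (s := (V, M)) hS i⟩), fun h V' M' hT' _ hr => ?_⟩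
  have hbelow : IsBelow (viewState owner i (V, M)) (V', M') :=
    isBelow_viewState (u := (V, M)) hS ⟨subset_rfl, Set.subset_union_left⟩
      (indist_of_reach_singleton hr)
  exact sat_mono owner hφ hview hT' (hbelow.fst_subset hT') hbelow.1 h

end Telling

theorem k_distributes_over_disjunction_general {P A : Type} (owner : A → P)
    (V : Set A) (M : Set (Msg P A)) (hS : TState owner V M)
    (i : P) (φ₁ φ₂ : Form P A) (h₁ : Positive φ₁) (h₂ : Positive φ₂) :
    sat owner (completeH P) (.ck {i} (.or φ₁ φ₂)) V M ↔
      sat owner (completeH P) (.ck {i} φ₁) V M ∨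
      sat owner (completeH P) (.ck {i} φ₂) V M := by
  rw [sat_ck_singleton_iff owner (φ := .or φ₁ φ₂) ⟨h₁, h₂⟩ hS, sat_ck_singleton_iff owner h₁ hS,
    sat_ck_singleton_iff owner h₂ hS]
  rfl

theorem k_distributes_over_disjunction {P A : Type} [Fintype P] (owner : A → P)
    (V : Set A) (M : Set (Msg P A)) (hS : TState owner V M)
    (i : P) (φ₁ φ₂ : Form P A) (h₁ : Positive φ₁) (h₂ : Positive φ₂) :
    sat owner (completeH P) (.ck {i} (.or φ₁ φ₂)) V M ↔
      sat owner (completeH P) (.ck {i} φ₁) V M ∨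
      sat owner (completeH P) (.ck {i} φ₂) V M :=
  k_distributes_over_disjunction_general owner V M hS i φ₁ φ₂ h₁ h₂
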